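/- For every integer d ≥ 3 and every ε ∈ [0,1), the maximum of R(δ) = h_b(δ)/(dδ + 1/(1-ε)) over δ ∈ [0,1] is strictly greater than R(1/(d+1)). -/

import Mathlib

/-- Binary entropy function (base 2), with the convention `0 * log 0 = 0`. -/
noncomputable def binEnt (p : ℝ) : ℝ :=
  -p * Real.logb 2 p - (1 - p) * Real.logb 2 (1 - p)

lemma binEnt_eq (p : ℝ) :
    binEnt p = (-(p * Real.log p) - (1 - p) * Real.log (1 - p)) / Real.log 2 := by
  unfold binEnt Real.logb
  ring

lemma binEnt_hasDerivAt {p : ℝ} (h0 : 0 < p) (h1 : p < 1) :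
    HasDerivAt binEnt ((Real.log (1 - p) - Real.log p) / Real.log 2) p := by
  have h1' : (0:ℝ) < 1 - p := by linarith
  have hA : HasDerivAt (fun x : ℝ => x * Real.log x) (Real.log p + 1) p :=
    Real.hasDerivAt_mul_log h0.ne'
  have hu : HasDerivAt (fun x : ℝ => 1 - x) (-1 : ℝ) p := by
    simpa using (hasDerivAt_id p).const_sub 1
  have hB : HasDerivAt (fun x : ℝ => (1 - x) * Real.log (1 - x))
      ((Real.log (1 - p) + 1) * (-1)) p :=
    (Real.hasDerivAt_mul_log h1'.ne').comp p hu
  have hC := (hA.neg.sub hB).div_const (Real.log 2)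
  have heq : binEnt = fun x : ℝ =>
      (-(x * Real.log x) - (1 - x) * Real.log (1 - x)) / Real.log 2 := by
    funext x; exact binEnt_eq x
  rw [heq]
  refine hC.congr_deriv ?_
  ring

theorem nc_strictly_exceeds_lb (d : ℕ) (hd : 3 ≤ d) (ε : ℝ) (hε : ε ∈ Set.Ico (0:ℝ) 1) :
    ∃ δ ∈ Set.Icc (0:ℝ) 1,
      binEnt (1 / (d + 1)) / (d * (1 / (d + 1)) + 1 / (1 - ε)) <
        binEnt δ / (d * δ + 1 / (1 - ε)) := by
  obtain ⟨hε0, hε1⟩ := hε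
  set k : ℝ := 1 / (1 - ε) with hk
  have hk1 : (1:ℝ) ≤ k := by
    rw [hk, le_div_iff₀ (by linarith)]; linarith
  have hd3 : (3:ℝ) ≤ (d:ℝ) := by exact_mod_cast hd
  set δ0 : ℝ := 1 / ((d:ℝ) + 1) with hδ0
  have hδ0pos : 0 < δ0 := by rw [hδ0]; positivity
  have hδ0lt : δ0 < 1 := by
    rw [hδ0, div_lt_one (by linarith)]; linarith
  set f : ℝ → ℝ := fun δ => binEnt δ / ((d:ℝ) * δ + k) with hf
  have hD : (0:ℝ) < (d:ℝ) * δ0 + k := by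
    have : (0:ℝ) ≤ (d:ℝ) * δ0 := by positivity
    linarith
  have hden : HasDerivAt (fun δ : ℝ => (d:ℝ) * δ + k) ((d:ℝ)) δ0 := by
    simpa using ((hasDerivAt_id δ0).const_mul (d:ℝ)).add_const k
  have hder : HasDerivAt f
      (((Real.log (1 - δ0) - Real.log δ0) / Real.log 2 * ((d:ℝ) * δ0 + k)
        - binEnt δ0 * (d:ℝ)) / ((d:ℝ) * δ0 + k) ^ 2) δ0 :=
    (binEnt_hasDerivAt hδ0pos hδ0lt).div hden hD.ne'
  -- positivity of the derivative
  have hlog2 : (0:ℝ) < Real.log 2 := Real.log_pos (by norm_num)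
  set P : ℝ := Real.log (d:ℝ) with hP
  set Q : ℝ := Real.log ((d:ℝ) + 1) with hQ
  have hP1 : 1 < P := by
    have h3 : (1:ℝ) < Real.log 3 := by
      rw [show (1:ℝ) = Real.log (Real.exp 1) by simp]
      exact Real.log_lt_log (Real.exp_pos 1) (by
        have := Real.exp_one_lt_d9; linarith)
    have : Real.log 3 ≤ P := Real.log_le_log (by norm_num) hd3
    linarith
  have hQP : Q - P < 1 / (d:ℝ) := by
    have hdpos : (0:ℝ) < (d:ℝ) := by linarith
    have hx : Real.log (((d:ℝ) + 1) / (d:ℝ)) < ((d:ℝ) + 1) / (d:ℝ) - 1 :=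
      Real.log_lt_sub_one_of_pos (by positivity) (by
        intro h
        rw [div_eq_one_iff_eq hdpos.ne'] at h
        linarith)
    rw [Real.log_div (by linarith) hdpos.ne'] at hx
    have heq1 : ((d:ℝ) + 1) / (d:ℝ) - 1 = 1 / (d:ℝ) := by field_simp; ring
    rw [heq1] at hx
    exact hx
  have hlogδ0 : Real.log δ0 = -Q := by
    rw [hδ0, hQ, one_div, Real.log_inv]
  have hlog1δ0 : Real.log (1 - δ0) = P - Q := by
    have h1 : (1:ℝ) - δ0 = (d:ℝ) / ((d:ℝ) + 1) := by
      rw [hδ0]; field_simp; ring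
    rw [h1, Real.log_div (by linarith) (by linarith)]
  have hnum : (Real.log (1 - δ0) - Real.log δ0) / Real.log 2 * ((d:ℝ) * δ0 + k)
        - binEnt δ0 * (d:ℝ)
      = (((d:ℝ) + k) * P - (d:ℝ) * Q) / Real.log 2 := by
    rw [binEnt_eq, hlogδ0, hlog1δ0, hδ0]
    have hd1 : ((d:ℝ) + 1) ≠ 0 := by linarith
    field_simp
    ring
  have hEpos : 0 < ((d:ℝ) + k) * P - (d:ℝ) * Q := by
    have h1 : (1:ℝ) < k * P := by nlinarith
    have h2 : (d:ℝ) * (Q - P) < 1 := by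
      have hdpos : (0:ℝ) < (d:ℝ) := by linarith
      calc (d:ℝ) * (Q - P) < (d:ℝ) * (1 / (d:ℝ)) := by
            exact mul_lt_mul_of_pos_left hQP hdpos
        _ = 1 := by field_simp
    nlinarith
  have hpos : 0 < ((Real.log (1 - δ0) - Real.log δ0) / Real.log 2 * ((d:ℝ) * δ0 + k)
      - binEnt δ0 * (d:ℝ)) / ((d:ℝ) * δ0 + k) ^ 2 := by
    rw [hnum]
    positivity
  -- from positive derivative, find a point to the right with larger value
  rw [hasDerivAt_iff_tendsto_slope] at hder
  have h1 : ∀ᶠ y in nhdsWithin δ0 (Set.Iio δ0 ∪ Set.Ioi δ0), 0 < slope f δ0 y := by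
    have : ∀ᶠ y in nhdsWithin δ0 {δ0}ᶜ, 0 < slope f δ0 y :=
      hder.eventually (eventually_gt_nhds hpos)
    simpa [Set.compl_eq_univ_diff] using this
  have h1' : ∀ᶠ y in nhdsWithin δ0 (Set.Ioi δ0), 0 < slope f δ0 y := by
    have : ∀ᶠ y in nhdsWithin δ0 {δ0}ᶜ, 0 < slope f δ0 y :=
      hder.eventually (eventually_gt_nhds hpos)
    exact this.filter_mono (nhdsWithin_mono _ (fun y hy => ne_of_gt hy))
  have h2 : ∀ᶠ y in nhdsWithin δ0 (Set.Ioi δ0), y < 1 :=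
    eventually_nhdsWithin_of_eventually_nhds (eventually_lt_nhds hδ0lt)
  have h3 : ∀ᶠ y in nhdsWithin δ0 (Set.Ioi δ0), δ0 < y :=
    eventually_mem_nhdsWithin
  obtain ⟨y, hy⟩ := ((h1'.and h2).and h3).exists
  obtain ⟨⟨hslope, hy1⟩, hy0⟩ := hy
  refine ⟨y, ⟨by linarith, le_of_lt hy1⟩, ?_⟩
  have hfy : f δ0 < f y := by
    rw [slope_def_field] at hslope
    have hyδ : 0 < y - δ0 := by linarith
    have := mul_pos hslope hyδ
    rw [div_mul_cancel₀] at this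
    · linarith
    · exact ne_of_gt hyδ
  simpa [hf, hδ0, hk] using hfy
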